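/- Let c > 0 and γ ∈ (6/5, 4/3]. Suppose Y : [0, ∞) → ℝ is C¹, a : [0, ∞) → ℝ is C¹ with a(t) ≥ c₀ > 0, and Y'(t) ≤ 3(3-2γ)·Y(t)/(1+t) + 2μ·(1+t)·(d/dt)(a(t)³) for all t ≥ 0, where μ > 0. Define a₁(t) = max_{s ∈ [0,t]} a(s). Then there exists a constant C > 0 (depending on Y(0), μ, c₀, γ) such that Y(t) ≤ C·(1+t)^(3(3-2γ))·a₁(t)³ for all t ≥ 0. -/

import Mathlib

/-!
Put `g := Y - 2μ (1+s) (a³ - M)` with `M := a₁(t)³`. Then on `[0, t]`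
`g' ≤ 3(3-2γ) g/(1+s) + 2μ(3(3-2γ) - 1)(a³ - M) ≤ 3(3-2γ) g/(1+s)`, because
`3(3-2γ) ≥ 1` and `a³ ≤ M` there. So `(1+s)^(-3(3-2γ)) g` is nonincreasing, and
`Y(t) ≤ g(t) ≤ (Y(0) + 2μ M)(1+t)^(3(3-2γ))`; finally `M ≥ c₀³` absorbs `Y(0)` into `M`.
-/

open Set

theorem hasDerivAt_one_add_rpow (p : ℝ) {s : ℝ} (hs : 0 < 1 + s) :
    HasDerivAt (fun x : ℝ => (1 + x) ^ p) (p * (1 + s) ^ p / (1 + s)) s := by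
  refine (((hasDerivAt_id' s).const_add 1).rpow_const (p := p) (Or.inl hs.ne')).congr_deriv ?_
  rw [Real.rpow_sub_one hs.ne']
  ring

theorem le_mul_one_add_rpow_of_deriv_le {g g' : ℝ → ℝ} {α t : ℝ} (ht : 0 ≤ t)
    (hg : ∀ s ∈ Icc 0 t, HasDerivAt g (g' s) s)
    (hle : ∀ s ∈ Ioo 0 t, g' s ≤ α * g s / (1 + s)) :
    g t ≤ g 0 * (1 + t) ^ α := by
  have hpos : ∀ s ∈ Icc 0 t, 0 < 1 + s := fun s hs => by linarith [hs.1]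
  set w' : ℝ → ℝ := fun s => (1 + s) ^ (-α) * (g' s - α * g s / (1 + s))
  have hderiv : ∀ s ∈ Icc 0 t, HasDerivAt (fun x => (1 + x) ^ (-α) * g x) (w' s) s :=
    fun s hs => ((hasDerivAt_one_add_rpow (-α) (hpos s hs)).mul (hg s hs)).congr_deriv (by ring)
  have hanti : AntitoneOn (fun x => (1 + x) ^ (-α) * g x) (Icc 0 t) := by
    refine antitoneOn_of_hasDerivWithinAt_nonpos (f' := w') (convex_Icc 0 t)
      (fun s hs => (hderiv s hs).continuousAt.continuousWithinAt) (fun s hs => ?_) fun s hs => ?_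
    all_goals rw [interior_Icc] at hs
    · exact (hderiv s (Ioo_subset_Icc_self hs)).hasDerivWithinAt
    · exact mul_nonpos_of_nonneg_of_nonpos
        (Real.rpow_nonneg (hpos s (Ioo_subset_Icc_self hs)).le _) (sub_nonpos.2 (hle s hs))
  have h := hanti ⟨le_rfl, ht⟩ ⟨ht, le_rfl⟩ ht
  simp only [add_zero, Real.one_rpow, one_mul] at h
  have ht1 := hpos t ⟨ht, le_rfl⟩
  rwa [Real.rpow_neg ht1.le, inv_mul_le_iff₀ (Real.rpow_pos_of_pos ht1 _), mul_comm] at h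

theorem le_mul_one_add_rpow_of_deriv_le_add_mul_deriv {Y Y' f f' : ℝ → ℝ} {α k M t : ℝ}
    (hα : 1 ≤ α) (hk : 0 ≤ k) (ht : 0 ≤ t)
    (hY : ∀ s ∈ Icc 0 t, HasDerivAt Y (Y' s) s) (hf : ∀ s ∈ Icc 0 t, HasDerivAt f (f' s) s)
    (hfM : ∀ s ∈ Icc 0 t, f s ≤ M)
    (hle : ∀ s ∈ Ioo 0 t, Y' s ≤ α * Y s / (1 + s) + k * (1 + s) * f' s) :
    Y t ≤ (Y 0 + k * (M - f 0)) * (1 + t) ^ α := by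
  set g : ℝ → ℝ := fun s => Y s - k * ((1 + s) * (f s - M))
  have hg : ∀ s ∈ Icc 0 t, HasDerivAt g (Y' s - k * (1 * (f s - M) + (1 + s) * f' s)) s :=
    fun s hs => (hY s hs).sub
      ((((hasDerivAt_id' s).const_add 1).mul ((hf s hs).sub_const M)).const_mul k)
  have hg_le :
      ∀ s ∈ Ioo 0 t, Y' s - k * (1 * (f s - M) + (1 + s) * f' s) ≤ α * g s / (1 + s) := by
    intro s hs
    have hs1 : 0 < 1 + s := by linarith [hs.1]
    have hsplit : α * g s / (1 + s) = α * Y s / (1 + s) - α * k * (f s - M) := by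
      simp only [g]
      field_simp
    have hdecay : k * (α - 1) * (f s - M) ≤ 0 :=
      mul_nonpos_of_nonneg_of_nonpos (mul_nonneg hk (sub_nonneg.2 hα))
        (sub_nonpos.2 (hfM s (Ioo_subset_Icc_self hs)))
    linarith [hle s hs]
  have hYg : Y t ≤ g t := by
    have hft := hfM t ⟨ht, le_rfl⟩
    have : 0 ≤ k * ((1 + t) * (M - f t)) := by positivity
    simp only [g]
    linarith
  calc Y t ≤ g t := hYg
    _ ≤ g 0 * (1 + t) ^ α := le_mul_one_add_rpow_of_deriv_le ht hg hg_le
    _ = (Y 0 + k * (M - f 0)) * (1 + t) ^ α := by simp only [g]; ring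

theorem stmt_13_general (γ μ c₀ : ℝ) (hγ2 : γ ≤ 4/3) (hμ : 0 < μ) (hc : 0 < c₀)
    (Y Y' a a' : ℝ → ℝ)
    (hY : ∀ t, 0 ≤ t → HasDerivAt Y (Y' t) t)
    (ha : ∀ t, 0 ≤ t → HasDerivAt a (a' t) t)
    (hac : ∀ t, 0 ≤ t → c₀ ≤ a t)
    (hineq : ∀ t, 0 ≤ t →
      Y' t ≤ 3*(3 - 2*γ) * Y t / (1 + t) + 2*μ*(1 + t) * (3 * (a t)^2 * a' t)) :
    ∃ C : ℝ, 0 < C ∧ ∀ t, 0 ≤ t →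
      Y t ≤ C * (1 + t) ^ (3*(3 - 2*γ)) * (sSup (a '' Set.Icc 0 t))^3 := by
  refine ⟨|Y 0| / c₀ ^ 3 + 2 * μ, by positivity, fun t ht => ?_⟩
  set M := sSup (a '' Icc 0 t) ^ 3
  have hcont : ContinuousOn a (Icc 0 t) := fun s hs => (ha s hs.1).continuousAt.continuousWithinAt
  have hcube_le : ∀ s ∈ Icc 0 t, a s ^ 3 ≤ M := fun s hs =>
    pow_le_pow_left₀ (hc.le.trans (hac s hs.1))
      (le_csSup (isCompact_Icc.bddAbove_image hcont) (mem_image_of_mem a hs)) 3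
  have hM : c₀ ^ 3 ≤ M :=
    (pow_le_pow_left₀ hc.le (hac 0 le_rfl) 3).trans (hcube_le 0 ⟨le_rfl, ht⟩)
  have hY0 : Y 0 ≤ |Y 0| / c₀ ^ 3 * M := by
    rw [div_mul_eq_mul_div, le_div_iff₀ (by positivity)]
    exact (mul_le_mul_of_nonneg_right (le_abs_self _) (by positivity)).trans
      (mul_le_mul_of_nonneg_left hM (abs_nonneg _))
  have ha0 : 0 ≤ a 0 ^ 3 := pow_nonneg (hc.le.trans (hac 0 le_rfl)) 3
  calc Y t ≤ (Y 0 + 2 * μ * (M - a 0 ^ 3)) * (1 + t) ^ (3 * (3 - 2 * γ)) :=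
        le_mul_one_add_rpow_of_deriv_le_add_mul_deriv (f := fun s => a s ^ 3) (by linarith)
          (by positivity) ht (fun s hs => hY s hs.1)
          (fun s hs => by simpa using (ha s hs.1).fun_pow 3) hcube_le fun s hs => hineq s hs.1.le
    _ ≤ (|Y 0| / c₀ ^ 3 + 2 * μ) * M * (1 + t) ^ (3 * (3 - 2 * γ)) := by
        gcongr
        nlinarith [mul_nonneg hμ.le ha0]
    _ = (|Y 0| / c₀ ^ 3 + 2 * μ) * (1 + t) ^ (3 * (3 - 2 * γ)) * M := by ring

/-- Integrating the differential inequality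
`Y' ≤ 3(3-2γ)Y/(1+t) + 2μ(1+t)(a³)'` yields `Y(t) ≤ C (1+t)^(3(3-2γ)) a₁(t)³`
where `a₁(t) = max_{[0,t]} a`. -/
theorem stmt_13 (γ μ c₀ : ℝ) (hγ1 : 6/5 < γ) (hγ2 : γ ≤ 4/3) (hμ : 0 < μ) (hc : 0 < c₀)
    (Y Y' a a' : ℝ → ℝ)
    (hY : ∀ t, 0 ≤ t → HasDerivAt Y (Y' t) t)
    (ha : ∀ t, 0 ≤ t → HasDerivAt a (a' t) t)
    (hac : ∀ t, 0 ≤ t → c₀ ≤ a t)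
    (hineq : ∀ t, 0 ≤ t →
      Y' t ≤ 3*(3 - 2*γ) * Y t / (1 + t) + 2*μ*(1 + t) * (3 * (a t)^2 * a' t)) :
    ∃ C : ℝ, 0 < C ∧ ∀ t, 0 ≤ t →
      Y t ≤ C * (1 + t) ^ (3*(3 - 2*γ)) * (sSup (a '' Set.Icc 0 t))^3 :=
  stmt_13_general γ μ c₀ hγ2 hμ hc Y Y' a a' hY ha hac hineq
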